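/- arXiv:1703.09837 — 2 statements merged into one kernel-verified Lean document; each statement's English description precedes it below -/
import Mathlib

section
/- For complex numbers a, b, c, d with sufficiently large real parts (so that the poles of Γ(a+s)Γ(b+s) lie to the left of the imaginary axis and those of Γ(c−s)Γ(d−s) to the right), one has ∫_{−i∞}^{i∞} Γ(a+s)Γ(b+s)Γ(c−s)Γ(d−s) ds/(2πi) = Γ(a+c)Γ(b+c)Γ(a+d)Γ(b+d)/Γ(a+b+c+d). -/
/-!
Write `σ` for the logistic function and `K_{z,w}(x) = σ(x)^z σ(-x)^w`. The substitution
`y = σ(x)`, `dy = σ(x) σ(-x) dx`, turns Euler's beta integral into `∫ K_{z,w} = B(z, w)`, and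
since `e^{s x} = K_{s,-s}(x)` the Fourier transform of `K_{z,w}` is
`ξ ↦ Γ(z - 2πiξ) Γ(w + 2πiξ) / Γ(z + w)`. Hence on the line `s = it` Barnes' integrand is
`Γ(a + c) Γ(b + d)` times a product of the Fourier transforms of `K_{a,c}` and `K_{b,d}`, and
Parseval's identity turns its integral into `∫ K_{a,c}(x) K_{b,d}(-x) dx = ∫ K_{a+d,b+c}`, which is
again a beta integral. The Fourier transforms are integrable because the family `K` is closed
under differentiation, so `K_{z,w}''` is integrable and `𝓕 K_{z,w}` decays like `ξ⁻²`.
-/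

open Complex MeasureTheory Real Set FourierTransform

namespace BarnesFirstLemma

section Fourier

variable {E : Type*} [NormedAddCommGroup E] [NormedSpace ℂ E]

lemma one_add_sq_mul_norm_fourier_le {f : ℝ → E} (hf : Integrable f)
    (hf_diff : Differentiable ℝ f) (hf' : Integrable (deriv f))
    (hf'_diff : Differentiable ℝ (deriv f)) (hf'' : Integrable (deriv (deriv f))) (ξ : ℝ) :
    (1 + ξ ^ 2) * ‖𝓕 f ξ‖ ≤ (∫ x, ‖f x‖) + (∫ x, ‖deriv (deriv f) x‖) / (4 * π ^ 2) := by
  have h0 : ‖𝓕 f ξ‖ ≤ ∫ x, ‖f x‖ := VectorFourier.norm_fourierIntegral_le_integral_norm _ _ _ _ _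
  have h2 : ‖𝓕 (deriv (deriv f)) ξ‖ ≤ ∫ x, ‖deriv (deriv f) x‖ :=
    VectorFourier.norm_fourierIntegral_le_integral_norm _ _ _ _ _
  have hnorm : ‖𝓕 (deriv (deriv f)) ξ‖ = 4 * π ^ 2 * ξ ^ 2 * ‖𝓕 f ξ‖ := by
    rw [fourier_deriv hf' hf'_diff hf'', fourier_deriv hf hf_diff hf']
    simp only [norm_smul, norm_mul, Complex.norm_ofNat, norm_real, norm_I,
      Real.norm_of_nonneg pi_pos.le, Real.norm_eq_abs]
    rw [← sq_abs ξ]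
    ring
  have h3 : ξ ^ 2 * ‖𝓕 f ξ‖ ≤ (∫ x, ‖deriv (deriv f) x‖) / (4 * π ^ 2) := by
    rw [le_div_iff₀ (by positivity)]
    linarith
  linarith

theorem integrable_fourier_of_deriv_deriv {f : ℝ → E} (hf : Integrable f)
    (hf_diff : Differentiable ℝ f) (hf' : Integrable (deriv f))
    (hf'_diff : Differentiable ℝ (deriv f)) (hf'' : Integrable (deriv (deriv f))) :
    Integrable (𝓕 f) := by
  refine (integrable_inv_one_add_sq.const_mul
    ((∫ x, ‖f x‖) + (∫ x, ‖deriv (deriv f) x‖) / (4 * π ^ 2))).mono'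
    (VectorFourier.fourierIntegral_continuous continuous_fourierChar
      (innerSL ℝ).continuous₂ hf).aestronglyMeasurable (ae_of_all _ fun ξ ↦ ?_)
  rw [← div_eq_mul_inv, le_div_iff₀ (by positivity), mul_comm]
  exact one_add_sq_mul_norm_fourier_le hf hf_diff hf' hf'_diff hf'' ξ

variable {V F : Type*} [NormedAddCommGroup V] [InnerProductSpace ℝ V] [MeasurableSpace V]
  [BorelSpace V] [FiniteDimensional ℝ V] [NormedAddCommGroup F] [NormedSpace ℂ F] [CompleteSpace F]

theorem integral_fourier_smul_fourier {f : V → ℂ} {g : V → F} (hf : Integrable f)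
    (hg : Integrable g) (hg_cont : Continuous g) (hFg : Integrable (𝓕 g)) :
    ∫ ξ, 𝓕 f ξ • 𝓕 g ξ = ∫ x, f x • g (-x) := by
  have h := VectorFourier.integral_fourierIntegral_smul_eq_flip (μ := volume) (ν := volume)
    (L := innerₗ V) continuous_fourierChar continuous_inner hf hFg
  rw [flip_innerₗ] at h
  refine h.trans (integral_congr_ae (ae_of_all _ fun x ↦ ?_))
  change f x • 𝓕 (𝓕 g) x = f x • g (-x)
  rw [← neg_neg x, ← fourierInv_eq_fourier_neg, hg_cont.fourierInv_fourier_eq hg hFg, neg_neg]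

end Fourier

noncomputable def betaKernel (z w : ℂ) (x : ℝ) : ℂ :=
  (sigmoid x : ℂ) ^ z * (sigmoid (-x) : ℂ) ^ w

lemma ofReal_sigmoid_ne_zero (x : ℝ) : (sigmoid x : ℂ) ≠ 0 :=
  ofReal_ne_zero.2 (sigmoid_pos x).ne'

lemma betaKernel_mul (z w z' w' : ℂ) (x : ℝ) :
    betaKernel z w x * betaKernel z' w' x = betaKernel (z + z') (w + w') x := by
  simp only [betaKernel, cpow_add _ _ (ofReal_sigmoid_ne_zero _)]
  ring

lemma betaKernel_neg (z w : ℂ) (x : ℝ) : betaKernel z w (-x) = betaKernel w z x := by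
  rw [betaKernel, betaKernel, neg_neg, mul_comm]

lemma log_sigmoid_sub_log_sigmoid_neg (x : ℝ) :
    Real.log (sigmoid x) - Real.log (sigmoid (-x)) = x := by
  rw [← Real.log_div (sigmoid_pos x).ne' (sigmoid_pos (-x)).ne', ← sigmoid_mul_rexp_neg x,
    div_mul_cancel_left₀ (sigmoid_pos x).ne', Real.log_inv, Real.log_exp, neg_neg]

lemma betaKernel_neg_right (s : ℂ) (x : ℝ) : betaKernel s (-s) x = cexp (s * x) := by
  rw [betaKernel, cpow_def_of_ne_zero (ofReal_sigmoid_ne_zero x),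
    cpow_def_of_ne_zero (ofReal_sigmoid_ne_zero (-x)), ← Complex.exp_add,
    ← ofReal_log (sigmoid_pos x).le, ← ofReal_log (sigmoid_pos (-x)).le]
  conv_rhs => rw [← log_sigmoid_sub_log_sigmoid_neg x]
  push_cast
  congr 1
  ring

lemma abs_deriv_sigmoid_smul_betaIntegrand (z w : ℂ) (x : ℝ) :
    |sigmoid x * (1 - sigmoid x)| •
      ((sigmoid x : ℂ) ^ (z - 1) * (1 - (sigmoid x : ℂ)) ^ (w - 1)) = betaKernel z w x := by
  have h1 : (1 : ℂ) - sigmoid x = sigmoid (-x) := by rw [sigmoid_neg]; push_cast; rfl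
  rw [← sigmoid_neg, abs_of_pos (mul_pos (sigmoid_pos x) (sigmoid_pos (-x))), h1, real_smul,
    cpow_sub _ _ (ofReal_sigmoid_ne_zero x), cpow_sub _ _ (ofReal_sigmoid_ne_zero (-x)),
    cpow_one, cpow_one, betaKernel]
  have := ofReal_sigmoid_ne_zero x
  have := ofReal_sigmoid_ne_zero (-x)
  push_cast
  field_simp

lemma integrableOn_betaIntegrand {z w : ℂ} (hz : 0 < z.re) (hw : 0 < w.re) :
    IntegrableOn (fun y : ℝ ↦ (y : ℂ) ^ (z - 1) * (1 - (y : ℂ)) ^ (w - 1)) (Ioo 0 1) :=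
  ((intervalIntegrable_iff_integrableOn_Ioc_of_le zero_le_one).mp
    (betaIntegral_convergent hz hw)).mono_set Ioo_subset_Ioc_self

lemma integrable_betaKernel {z w : ℂ} (hz : 0 < z.re) (hw : 0 < w.re) :
    Integrable (betaKernel z w) := by
  have h := (integrableOn_image_iff_integrableOn_abs_deriv_smul MeasurableSet.univ
    (fun x _ ↦ (hasDerivAt_sigmoid x).hasDerivWithinAt) sigmoid_injective.injOn
    (fun y : ℝ ↦ (y : ℂ) ^ (z - 1) * (1 - (y : ℂ)) ^ (w - 1))).mp
    (by rw [image_univ, range_sigmoid]; exact integrableOn_betaIntegrand hz hw)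
  simpa only [abs_deriv_sigmoid_smul_betaIntegrand, integrableOn_univ] using h

lemma integral_betaKernel {z w : ℂ} (hz : 0 < z.re) (hw : 0 < w.re) :
    ∫ x, betaKernel z w x = Gamma z * Gamma w / Gamma (z + w) := by
  have h := integral_image_eq_integral_abs_deriv_smul MeasurableSet.univ
    (fun x _ ↦ (hasDerivAt_sigmoid x).hasDerivWithinAt) sigmoid_injective.injOn
    (fun y : ℝ ↦ (y : ℂ) ^ (z - 1) * (1 - (y : ℂ)) ^ (w - 1))
  simp only [image_univ, range_sigmoid, abs_deriv_sigmoid_smul_betaIntegrand,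
    Measure.restrict_univ] at h
  rw [Gamma_mul_Gamma_eq_betaIntegral hz hw, betaIntegral, intervalIntegral.integral_of_le
    zero_le_one, integral_Ioc_eq_integral_Ioo, h,
    mul_div_cancel_left₀ _ (Gamma_ne_zero_of_re_pos (by rw [add_re]; positivity))]

lemma fourier_betaKernel {z w : ℂ} (hz : 0 < z.re) (hw : 0 < w.re) (ξ : ℝ) :
    𝓕 (betaKernel z w) ξ =
      Gamma (z - 2 * π * ξ * I) * Gamma (w + 2 * π * ξ * I) / Gamma (z + w) := by
  have hK (x : ℝ) : cexp (↑(-2 * π * x * ξ) * I) • betaKernel z w x =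
      betaKernel (z - 2 * π * ξ * I) (w + 2 * π * ξ * I) x := by
    have harg : (↑(-2 * π * x * ξ) * I : ℂ) = -(2 * π * ξ * I) * x := by push_cast; ring
    rw [smul_eq_mul, harg, ← betaKernel_neg_right, betaKernel_mul]
    congr 1 <;> ring
  simp only [fourier_real_eq_integral_exp_smul, hK]
  rw [integral_betaKernel (by simpa using hz) (by simpa using hw),
    show z - 2 * π * ξ * I + (w + 2 * π * ξ * I) = z + w by ring]

lemma hasDerivAt_ofReal_sigmoid_cpow (z : ℂ) (x : ℝ) :
    HasDerivAt (fun x ↦ (sigmoid x : ℂ) ^ z) (z * (sigmoid x : ℂ) ^ z * sigmoid (-x)) x := by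
  have h := (hasStrictDerivAt_cpow_const (c := z) (ofReal_mem_slitPlane.2 (sigmoid_pos x))
    ).hasDerivAt.comp x (hasDerivAt_sigmoid x).ofReal_comp
  refine h.congr_deriv ?_
  rw [← sigmoid_neg, cpow_sub _ _ (ofReal_sigmoid_ne_zero x), cpow_one]
  have := ofReal_sigmoid_ne_zero x
  push_cast
  field_simp

lemma hasDerivAt_betaKernel (z w : ℂ) (x : ℝ) :
    HasDerivAt (betaKernel z w) (z * betaKernel z (w + 1) x - w * betaKernel (z + 1) w x) x := by
  have hneg := (hasDerivAt_ofReal_sigmoid_cpow w (-x)).scomp x (hasDerivAt_neg x)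
  refine ((hasDerivAt_ofReal_sigmoid_cpow z x).mul hneg).congr_deriv ?_
  simp only [betaKernel, Function.comp_apply, neg_neg, neg_one_smul,
    cpow_add _ _ (ofReal_sigmoid_ne_zero _), cpow_one]
  ring

private lemma re_add_one_pos {z : ℂ} (hz : 0 < z.re) : 0 < (z + 1).re := by
  rw [add_re, one_re]
  linarith

lemma differentiable_betaKernel (z w : ℂ) : Differentiable ℝ (betaKernel z w) :=
  fun x ↦ (hasDerivAt_betaKernel z w x).differentiableAt

lemma deriv_betaKernel (z w : ℂ) :
    deriv (betaKernel z w) = fun x ↦ z * betaKernel z (w + 1) x - w * betaKernel (z + 1) w x :=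
  funext fun x ↦ (hasDerivAt_betaKernel z w x).deriv

lemma hasDerivAt_deriv_betaKernel (z w : ℂ) (x : ℝ) :
    HasDerivAt (deriv (betaKernel z w))
      (z * deriv (betaKernel z (w + 1)) x - w * deriv (betaKernel (z + 1) w) x) x := by
  simp only [deriv_betaKernel]
  exact ((hasDerivAt_betaKernel z (w + 1) x).const_mul z).fun_sub
    ((hasDerivAt_betaKernel (z + 1) w x).const_mul w)

lemma integrable_deriv_betaKernel {z w : ℂ} (hz : 0 < z.re) (hw : 0 < w.re) :
    Integrable (deriv (betaKernel z w)) := by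
  rw [deriv_betaKernel]
  exact ((integrable_betaKernel hz (re_add_one_pos hw)).const_mul z).sub
    ((integrable_betaKernel (re_add_one_pos hz) hw).const_mul w)

lemma integrable_deriv_deriv_betaKernel {z w : ℂ} (hz : 0 < z.re) (hw : 0 < w.re) :
    Integrable (deriv (deriv (betaKernel z w))) := by
  rw [funext fun x ↦ (hasDerivAt_deriv_betaKernel z w x).deriv]
  exact ((integrable_deriv_betaKernel hz (re_add_one_pos hw)).const_mul z).sub
    ((integrable_deriv_betaKernel (re_add_one_pos hz) hw).const_mul w)

lemma integrable_fourier_betaKernel {z w : ℂ} (hz : 0 < z.re) (hw : 0 < w.re) :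
    Integrable (𝓕 (betaKernel z w)) :=
  integrable_fourier_of_deriv_deriv (integrable_betaKernel hz hw)
    (differentiable_betaKernel z w) (integrable_deriv_betaKernel hz hw)
    (fun x ↦ (hasDerivAt_deriv_betaKernel z w x).differentiableAt)
    (integrable_deriv_deriv_betaKernel hz hw)

lemma integral_fourier_betaKernel_mul_fourier_betaKernel {a b c d : ℂ} (ha : 0 < a.re)
    (hb : 0 < b.re) (hc : 0 < c.re) (hd : 0 < d.re) :
    ∫ ξ, 𝓕 (betaKernel a c) ξ * 𝓕 (betaKernel b d) ξ =
      Gamma (a + d) * Gamma (b + c) / Gamma (a + b + c + d) := by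
  have h := integral_fourier_smul_fourier (integrable_betaKernel ha hc)
    (integrable_betaKernel hb hd) (differentiable_betaKernel b d).continuous
    (integrable_fourier_betaKernel hb hd)
  simp only [smul_eq_mul, betaKernel_neg, betaKernel_mul] at h
  rw [h, add_comm c b, integral_betaKernel (by rw [add_re]; positivity) (by rw [add_re]; positivity),
    show a + d + (b + c) = a + b + c + d by ring]

lemma Gamma_mul_Gamma_eq_fourier_betaKernel {z w : ℂ} (hz : 0 < z.re) (hw : 0 < w.re) (t : ℝ) :
    Gamma (z + t * I) * Gamma (w - t * I) =
      Gamma (z + w) * 𝓕 (betaKernel z w) (-(2 * π)⁻¹ * t) := by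
  have ht : (2 * π * ↑(-(2 * π)⁻¹ * t) : ℂ) = -t := by
    push_cast
    field_simp
  rw [fourier_betaKernel hz hw, ht, mul_div_cancel₀ _
    (Gamma_ne_zero_of_re_pos (by rw [add_re]; positivity)), neg_mul, sub_neg_eq_add,
    ← sub_eq_add_neg]

end BarnesFirstLemma

open BarnesFirstLemma in
/-- **Barnes' first lemma.** The integral over the imaginary axis (parameterized
as `s = i t`, so that `ds/(2πi) = dt/(2π)`) of
`Γ(a+s)Γ(b+s)Γ(c−s)Γ(d−s)` equals `Γ(a+c)Γ(b+c)Γ(a+d)Γ(b+d)/Γ(a+b+c+d)`,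
provided the real parts of `a, b, c, d` are positive (so the contour separates
the increasing from the decreasing poles). -/
theorem barnes_first_lemma (a b c d : ℂ)
    (ha : 0 < a.re) (hb : 0 < b.re) (hc : 0 < c.re) (hd : 0 < d.re) :
    (1 / (2 * Real.pi) : ℝ) • ∫ t : ℝ,
        Complex.Gamma (a + t * Complex.I) * Complex.Gamma (b + t * Complex.I) *
        Complex.Gamma (c - t * Complex.I) * Complex.Gamma (d - t * Complex.I)
      = Complex.Gamma (a + c) * Complex.Gamma (b + c) *
        Complex.Gamma (a + d) * Complex.Gamma (b + d) /
        Complex.Gamma (a + b + c + d) := by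
  have hGamma (t : ℝ) : Gamma (a + t * I) * Gamma (b + t * I) * Gamma (c - t * I) *
      Gamma (d - t * I) = Gamma (a + c) * Gamma (b + d) *
        (fun ξ ↦ 𝓕 (betaKernel a c) ξ * 𝓕 (betaKernel b d) ξ) (-(2 * π)⁻¹ * t) := by
    rw [← mul_mul_mul_comm, ← Gamma_mul_Gamma_eq_fourier_betaKernel ha hc,
      ← Gamma_mul_Gamma_eq_fourier_betaKernel hb hd]
    ring
  have h2π : |(-(2 * π)⁻¹)⁻¹| = 2 * π := by
    rw [inv_neg, inv_inv, abs_neg, abs_of_pos two_pi_pos]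
  rw [funext hGamma, integral_const_mul,
    Measure.integral_comp_mul_left (fun ξ ↦ 𝓕 (betaKernel a c) ξ * 𝓕 (betaKernel b d) ξ), h2π,
    integral_fourier_betaKernel_mul_fourier_betaKernel ha hb hc hd, mul_smul_comm, smul_smul,
    one_div_mul_cancel two_pi_pos.ne', one_smul]
  ring
end

section
/- For v ∈ ℝ³ with v₁ ≤ v₂ ≤ v₃ and any 0 < ε < 1/2, there is a constant C depending only on ε such that ∫_ℝ ∏_{i=1}^{3} |1+i(u−v_i)|^{−3/2+ε} du ≤ C |1+i(v₂−v₁)|^{−3/2+ε} |1+i(v₃−v₂)|^{−3/2+ε}. -/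
open MeasureTheory

/-- `|1 + i x| = √(1 + x²)` for real `x`. -/
noncomputable def absOnePlusI (x : ℝ) : ℝ := Real.sqrt (1 + x ^ 2)

lemma absOnePlusI_pos (x : ℝ) : 0 < absOnePlusI x :=
  Real.sqrt_pos.2 (by positivity)

lemma absOnePlusI_neg (x : ℝ) : absOnePlusI (-x) = absOnePlusI x := by
  simp [absOnePlusI, neg_sq]

lemma absOnePlusI_mono {x y : ℝ} (h : x ^ 2 ≤ y ^ 2) : absOnePlusI x ≤ absOnePlusI y :=
  Real.sqrt_le_sqrt (by linarith)

lemma absOnePlusI_double (t : ℝ) : absOnePlusI t ≤ 2 * absOnePlusI (t / 2) := by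
  have h1 : absOnePlusI t ≤ Real.sqrt (4 * (1 + (t/2)^2)) := by
    apply Real.sqrt_le_sqrt
    nlinarith [sq_nonneg t]
  calc absOnePlusI t ≤ Real.sqrt (4 * (1 + (t/2)^2)) := h1
    _ = Real.sqrt 4 * Real.sqrt (1 + (t/2)^2) := Real.sqrt_mul (by norm_num) _
    _ = 2 * absOnePlusI (t/2) := by
        rw [show Real.sqrt 4 = 2 by
          rw [show (4:ℝ) = 2^2 by norm_num, Real.sqrt_sq (by norm_num)]]
        rfl

/-- Key estimate: if `|x| ≥ t/2` (as squares), then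
`absOnePlusI x ^ p ≤ 2^(-p) * absOnePlusI t ^ p` for `p ≤ 0`. -/
lemma H_key {p : ℝ} (hp : p ≤ 0) {x t : ℝ} (h : (t/2)^2 ≤ x^2) :
    absOnePlusI x ^ p ≤ 2^(-p) * absOnePlusI t ^ p := by
  have h1 : absOnePlusI x ^ p ≤ absOnePlusI (t/2) ^ p :=
    Real.rpow_le_rpow_of_nonpos (absOnePlusI_pos _) (absOnePlusI_mono h) hp
  have h2 : (2 * absOnePlusI (t/2)) ^ p ≤ absOnePlusI t ^ p :=
    Real.rpow_le_rpow_of_nonpos (absOnePlusI_pos _) (absOnePlusI_double t) hp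
  rw [Real.mul_rpow (by norm_num) (absOnePlusI_pos _).le] at h2
  have hK : (0:ℝ) < 2 ^ p := Real.rpow_pos_of_pos (by norm_num) p
  have h3 : absOnePlusI (t/2) ^ p ≤ (2^p)⁻¹ * absOnePlusI t ^ p := by
    calc absOnePlusI (t/2) ^ p = (2^p)⁻¹ * (2^p * absOnePlusI (t/2) ^ p) := by
          field_simp
      _ ≤ (2^p)⁻¹ * absOnePlusI t ^ p := by
          apply mul_le_mul_of_nonneg_left h2 (inv_nonneg.2 hK.le)
  rw [Real.rpow_neg (by norm_num)]
  exact h1.trans h3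

lemma H_integrable {p : ℝ} (hp : p < -1) :
    Integrable (fun x : ℝ => absOnePlusI x ^ p) := by
  have hp0 : p ≤ 0 := by linarith
  have hcont : Continuous fun x : ℝ => absOnePlusI x ^ p := by
    apply Continuous.rpow_const
    · exact (continuous_const.add (continuous_pow 2)).sqrt
    · exact fun x => Or.inl (absOnePlusI_pos x).ne'
  have hIoi : IntegrableOn (fun x : ℝ => absOnePlusI x ^ p) (Set.Ioi 1) := by
    have hbase : IntegrableOn (fun x : ℝ => x ^ p) (Set.Ioi (1:ℝ)) :=
      integrableOn_Ioi_rpow_of_lt hp one_pos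
    refine hbase.mono' hcont.aestronglyMeasurable.restrict ?_
    filter_upwards [ae_restrict_mem measurableSet_Ioi] with x hx
    have hx1 : (1:ℝ) < x := hx
    have hxabs : x ≤ absOnePlusI x := by
      have h := Real.sqrt_le_sqrt (show x^2 ≤ 1 + x^2 by linarith)
      rwa [Real.sqrt_sq (by linarith)] at h
    rw [Real.norm_of_nonneg (Real.rpow_nonneg (absOnePlusI_pos x).le p)]
    exact Real.rpow_le_rpow_of_nonpos (by linarith) hxabs hp0
  have hIio : IntegrableOn (fun x : ℝ => absOnePlusI x ^ p) (Set.Iio (-1:ℝ)) := by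
    have h1 : Integrable ((Set.Ioi (1:ℝ)).indicator (fun x : ℝ => absOnePlusI x ^ p)) :=
      (integrable_indicator_iff measurableSet_Ioi).2 hIoi
    have h2 := h1.comp_neg
    have heq : (fun x : ℝ => (Set.Ioi (1:ℝ)).indicator (fun y : ℝ => absOnePlusI y ^ p) (-x))
        = (Set.Iio (-1:ℝ)).indicator (fun y : ℝ => absOnePlusI y ^ p) := by
      funext x
      simp only [Set.indicator_apply, Set.mem_Ioi, Set.mem_Iio]
      by_cases h : x < -1
      · rw [if_pos (by linarith), if_pos h, absOnePlusI_neg]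
      · rw [if_neg (fun hh => h (by linarith)), if_neg h]
    rw [heq] at h2
    exact (integrable_indicator_iff measurableSet_Iio).1 h2
  have hIcc : IntegrableOn (fun x : ℝ => absOnePlusI x ^ p) (Set.Icc (-1:ℝ) 1) :=
    hcont.integrableOn_Icc
  rw [← integrableOn_univ]
  refine ((hIio.union (hIcc.union hIoi)).mono_set ?_)
  intro x _
  rcases lt_or_ge x (-1) with h | h
  · exact Or.inl h
  · rcases le_or_gt x 1 with h' | h'
    · exact Or.inr (Or.inl ⟨h, h'⟩)
    · exact Or.inr (Or.inr h')

/-- Third estimate of the elementary bounds lemma: for `v ∈ ℝ³` with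
`v₁ ≤ v₂ ≤ v₃` and `0 < ε < 1/2`,
`∫_ℝ ∏_i |1+i(u−v_i)|^{−3/2+ε} du
  ≤ C |1+i(v₂−v₁)|^{−3/2+ε} |1+i(v₃−v₂)|^{−3/2+ε}`
with `C` depending only on `ε`. -/
theorem elem_bound_three (ε : ℝ) (hε : 0 < ε) (hε' : ε < 1 / 2) :
    ∃ C : ℝ, 0 < C ∧ ∀ v : Fin 3 → ℝ,
      v 0 ≤ v 1 → v 1 ≤ v 2 →
      (∫ u : ℝ, ∏ i : Fin 3, absOnePlusI (u - v i) ^ (-(3 : ℝ) / 2 + ε))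
        ≤ C * absOnePlusI (v 1 - v 0) ^ (-(3 : ℝ) / 2 + ε) *
            absOnePlusI (v 2 - v 1) ^ (-(3 : ℝ) / 2 + ε) := by
  set p : ℝ := -(3 : ℝ) / 2 + ε with hpdef
  have hp1 : p < -1 := by rw [hpdef]; linarith
  have hp0 : p ≤ 0 := by linarith
  set H : ℝ → ℝ := fun x => absOnePlusI x ^ p with hHdef
  have hHpos : ∀ x, 0 < H x := fun x => Real.rpow_pos_of_pos (absOnePlusI_pos x) p
  have hHint : Integrable H := H_integrable hp1
  set I : ℝ := ∫ x, H x with hIdef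
  have hI0 : 0 ≤ I := integral_nonneg fun x => (hHpos x).le
  set K : ℝ := 2 ^ (-p) with hKdef
  have hK0 : 0 < K := Real.rpow_pos_of_pos (by norm_num) _
  refine ⟨3 * K^2 * (I + 1), by positivity, fun v h01 h12 => ?_⟩
  set A : ℝ := H (v 1 - v 0) with hAdef
  set B : ℝ := H (v 2 - v 1) with hBdef
  have hA0 : 0 < A := hHpos _
  have hB0 : 0 < B := hHpos _
  -- pointwise bound
  have hpt : ∀ u : ℝ, H (u - v 0) * H (u - v 1) * H (u - v 2)
      ≤ K^2 * A * B * (H (u - v 0) + H (u - v 1) + H (u - v 2)) := by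
    intro u
    have hH0 := (hHpos (u - v 0)).le
    have hH1 := (hHpos (u - v 1)).le
    have hH2 := (hHpos (u - v 2)).le
    rcases le_or_gt u ((v 0 + v 1)/2) with h | h
    · -- keep H (u - v 0)
      have k1 : H (u - v 1) ≤ K * A := by
        apply H_key hp0
        have h1 : (v 1 - v 0)/2 ≤ v 1 - u := by linarith
        calc ((v 1 - v 0)/2)^2 ≤ (v 1 - u)^2 :=
              pow_le_pow_left₀ (by linarith) h1 2
          _ = (u - v 1)^2 := by ring
      have k2 : H (u - v 2) ≤ K * B := by
        apply H_key hp0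
        have h1 : (v 2 - v 1)/2 ≤ v 2 - u := by linarith
        calc ((v 2 - v 1)/2)^2 ≤ (v 2 - u)^2 :=
              pow_le_pow_left₀ (by linarith) h1 2
          _ = (u - v 2)^2 := by ring
      calc H (u - v 0) * H (u - v 1) * H (u - v 2)
          ≤ H (u - v 0) * (K * A) * (K * B) := by gcongr
        _ = K^2 * A * B * H (u - v 0) := by ring
        _ ≤ K^2 * A * B * (H (u - v 0) + H (u - v 1) + H (u - v 2)) := by
            apply mul_le_mul_of_nonneg_left (by linarith) (by positivity)
    · rcases le_or_gt u ((v 1 + v 2)/2) with h' | h'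
      · -- keep H (u - v 1)
        have k1 : H (u - v 0) ≤ K * A := by
          apply H_key hp0
          have h1 : (v 1 - v 0)/2 ≤ u - v 0 := by linarith
          exact pow_le_pow_left₀ (by linarith) h1 2
        have k2 : H (u - v 2) ≤ K * B := by
          apply H_key hp0
          have h1 : (v 2 - v 1)/2 ≤ v 2 - u := by linarith
          calc ((v 2 - v 1)/2)^2 ≤ (v 2 - u)^2 :=
                pow_le_pow_left₀ (by linarith) h1 2
            _ = (u - v 2)^2 := by ring
        calc H (u - v 0) * H (u - v 1) * H (u - v 2)
            ≤ (K * A) * H (u - v 1) * (K * B) := by gcongr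
          _ = K^2 * A * B * H (u - v 1) := by ring
          _ ≤ K^2 * A * B * (H (u - v 0) + H (u - v 1) + H (u - v 2)) := by
              apply mul_le_mul_of_nonneg_left (by linarith) (by positivity)
      · -- keep H (u - v 2)
        have k1 : H (u - v 0) ≤ K * A := by
          apply H_key hp0
          have h1 : (v 1 - v 0)/2 ≤ u - v 0 := by linarith
          exact pow_le_pow_left₀ (by linarith) h1 2
        have k2 : H (u - v 1) ≤ K * B := by
          apply H_key hp0
          have h1 : (v 2 - v 1)/2 ≤ u - v 1 := by linarith
          exact pow_le_pow_left₀ (by linarith) h1 2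
        calc H (u - v 0) * H (u - v 1) * H (u - v 2)
            ≤ (K * A) * (K * B) * H (u - v 2) := by gcongr
          _ = K^2 * A * B * H (u - v 2) := by ring
          _ ≤ K^2 * A * B * (H (u - v 0) + H (u - v 1) + H (u - v 2)) := by
              apply mul_le_mul_of_nonneg_left (by linarith) (by positivity)
  -- integrability of the majorant
  have hint0 : Integrable (fun u : ℝ => H (u - v 0)) := hHint.comp_sub_right (v 0)
  have hint1 : Integrable (fun u : ℝ => H (u - v 1)) := hHint.comp_sub_right (v 1)
  have hint2 : Integrable (fun u : ℝ => H (u - v 2)) := hHint.comp_sub_right (v 2)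
  have hmaj : Integrable (fun u : ℝ =>
      K^2 * A * B * (H (u - v 0) + H (u - v 1) + H (u - v 2))) :=
    ((hint0.add hint1).add hint2).const_mul _
  have hval : (∫ u : ℝ, K^2 * A * B * (H (u - v 0) + H (u - v 1) + H (u - v 2)))
      = K^2 * A * B * (3 * I) := by
    rw [integral_const_mul]
    congr 1
    have hint01 : Integrable (fun u : ℝ => H (u - v 0) + H (u - v 1)) := hint0.add hint1
    rw [integral_add hint01 hint2, integral_add hint0 hint1,
      integral_sub_right_eq_self H (v 0), integral_sub_right_eq_self H (v 1),
      integral_sub_right_eq_self H (v 2)]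
    ring
  calc (∫ u : ℝ, ∏ i : Fin 3, absOnePlusI (u - v i) ^ p)
      = ∫ u : ℝ, H (u - v 0) * H (u - v 1) * H (u - v 2) := by
        simp only [Fin.prod_univ_three, hHdef]
    _ ≤ ∫ u : ℝ, K^2 * A * B * (H (u - v 0) + H (u - v 1) + H (u - v 2)) := by
        apply integral_mono_of_nonneg
        · exact ae_of_all _ fun u =>
            mul_nonneg (mul_nonneg (hHpos _).le (hHpos _).le) (hHpos _).le
        · exact hmaj
        · exact ae_of_all _ hpt
    _ = K^2 * A * B * (3 * I) := hval
    _ ≤ 3 * K^2 * (I + 1) * A * B := by nlinarith [sq_nonneg K, mul_pos hA0 hB0, mul_pos (mul_pos hA0 hB0) (pow_pos hK0 2)]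
end
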